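/- arXiv:2005.02391 — 2 statements merged into one kernel-verified Lean document; each statement's English description precedes it below -/
import Mathlib

section
/- Define c(n,k) = (2/4^k) · ∑_{j=1}^{k} (-1)^{k−j} C(2k, k−j) (2j)^{2n}. Then for all natural numbers n ≥ k ≥ 1, ∑_{i=k}^{n} C(k, i−k) c(n,i) = 2^{2(n−k)} c(n,k). -/
/-!
Write `δₕ f x = f (x + h) - 2 f x + f (x - h)` and `g x = (2x)^(2n)`. Since `g` is even and
vanishes at `0`, expanding `δ₁ⁱ g 0` and pairing the terms at `±j` gives `4ⁱ c(n,i) = δ₁ⁱ g 0`;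
this vanishes for `i > n` because `g` is a polynomial of degree `2n`. Pointwise,
`δ₂ = δ₁ (δ₁ + 4)`, so `δ₂ᵏ = ∑ᵣ C(k,r) 4^(k-r) δ₁^(k+r)`, while `g (2x) = 2^(2n) g x` gives
`δ₂ᵏ g 0 = 2^(2n) δ₁ᵏ g 0`. Evaluating both expressions for `δ₂ᵏ g 0` yields the identity.
-/

open Finset Function Polynomial fwdDiff_aux

/-- The coefficients c(n,k) as rational numbers. -/
def cCoeff (n k : ℕ) : ℚ :=
  (2 / 4 ^ k) * ∑ j ∈ Finset.Icc 1 k,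
    (-1 : ℚ) ^ (k - j) * ((2 * k).choose (k - j)) * (2 * j : ℚ) ^ (2 * n)

theorem Finset.sum_range_two_mul_add_one_eq_add_sum_Icc {M : Type*} [AddCommMonoid M]
    (F : ℕ → M) (i : ℕ) :
    ∑ m ∈ range (2 * i + 1), F m = F i + ∑ j ∈ Icc 1 i, (F (i - j) + F (i + j)) := by
  induction i generalizing F with
  | zero => simp
  | succ i ih =>
    rw [show 2 * (i + 1) + 1 = 2 * i + 1 + 1 + 1 by ring, sum_range_succ', sum_range_succ,
      ih (fun m => F (m + 1)), sum_Icc_succ_top (by omega)]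
    have hpair : ∀ j ∈ Icc 1 i, F (i - j + 1) + F (i + j + 1) = F (i + 1 - j) + F (i + 1 + j) := by
      intro j hj
      rw [mem_Icc] at hj
      rw [show i - j + 1 = i + 1 - j by omega, show i + j + 1 = i + 1 + j by omega]
    rw [sum_congr rfl hpair, Nat.sub_self, show 2 * i + 1 + 1 = i + 1 + (i + 1) by ring]
    abel

section SecondCentralDiff

variable {M G : Type*} [AddCommGroup M] [AddCommGroup G]

variable (M G) in
def secondCentralDiffₗ (h : M) : Module.End ℤ (M → G) := shiftₗ M G (-h) * fwdDiffₗ M G h ^ 2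

variable (h : M)

theorem secondCentralDiffₗ_apply (f : M → G) (x : M) :
    secondCentralDiffₗ M G h f x = f (x + h) - 2 • f x + f (x - h) := by
  simp only [secondCentralDiffₗ, Module.End.mul_apply, shiftₗ_apply, coe_fwdDiffₗ_pow,
    iterate_succ, iterate_zero, comp_apply, id_eq, fwdDiff]
  rw [neg_add_cancel_right, ← sub_eq_add_neg]
  abel

theorem commute_shiftₗ_fwdDiffₗ (h' : M) : Commute (shiftₗ M G h') (fwdDiffₗ M G h) := by
  ext f x
  have hshift : shiftₗ M G h' f = fun y => f (y + h') := funext (shiftₗ_apply h' f)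
  simp only [Module.End.mul_apply, shiftₗ_apply, coe_fwdDiffₗ, hshift, fwdDiff_comp_add]

theorem secondCentralDiffₗ_pow (i : ℕ) :
    secondCentralDiffₗ M G h ^ i = shiftₗ M G (-h) ^ i * fwdDiffₗ M G h ^ (2 * i) := by
  rw [secondCentralDiffₗ, ((commute_shiftₗ_fwdDiffₗ h (-h)).pow_right 2).mul_pow, ← pow_mul]

theorem secondCentralDiffₗ_pow_apply (i : ℕ) (f : M → G) (x : M) :
    (secondCentralDiffₗ M G h ^ i) f x = ∑ m ∈ range (2 * i + 1),
      ((-1 : ℤ) ^ (2 * i - m) * (2 * i).choose m) • f (x - i • h + m • h) := by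
  rw [secondCentralDiffₗ_pow, Module.End.mul_apply, shiftₗ_pow_apply, coe_fwdDiffₗ_pow,
    fwdDiff_iter_eq_sum_shift, smul_neg, ← sub_eq_add_neg]

theorem secondCentralDiffₗ_pow_apply_zero_of_even {f : M → G} (hf : ∀ x, f (-x) = f x)
    (hf0 : f 0 = 0) (i : ℕ) :
    (secondCentralDiffₗ M G h ^ i) f 0 =
      2 • ∑ j ∈ Icc 1 i, ((-1 : ℤ) ^ (i - j) * (2 * i).choose (i - j)) • f (j • h) := by
  simp only [secondCentralDiffₗ_pow_apply, sum_range_two_mul_add_one_eq_add_sum_Icc, zero_sub,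
    neg_add_cancel, hf0, smul_zero, zero_add, smul_sum]
  refine sum_congr rfl fun j hj => ?_
  rw [mem_Icc] at hj
  have hleft : -(i • h) + (i - j) • h = -(j • h) := by
    rw [sub_nsmul _ hj.2]; abel
  have hright : -(i • h) + (i + j) • h = j • h := by
    rw [add_nsmul]; abel
  have hsign : (-1 : ℤ) ^ (2 * i - (i - j)) = (-1) ^ (i - j) := by
    rw [show 2 * i - (i - j) = i - j + 2 * j by omega, pow_add, pow_mul, neg_one_sq, one_pow,
      mul_one]
  have hchoose : (2 * i).choose (i + j) = (2 * i).choose (i - j) :=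
    Nat.choose_symm_of_eq_add (by omega)
  rw [hleft, hright, hf, hsign, show 2 * i - (i + j) = i - j by omega, hchoose, two_nsmul]

theorem secondCentralDiffₗ_pow_apply_map {M' : Type*} [AddCommGroup M'] (φ : M →+ M') (i : ℕ)
    (f : M' → G) (x : M) :
    (secondCentralDiffₗ M' G (φ h) ^ i) f (φ x) = (secondCentralDiffₗ M G h ^ i) (f ∘ φ) x := by
  simp only [secondCentralDiffₗ_pow_apply, comp_apply, map_add, map_sub, map_nsmul]

theorem secondCentralDiffₗ_two_nsmul :
    secondCentralDiffₗ M G (2 • h) = secondCentralDiffₗ M G h * (secondCentralDiffₗ M G h + 4) := by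
  ext f x
  have h4 : (4 : Module.End ℤ (M → G)) f = 4 • f := rfl
  simp only [Module.End.mul_apply, LinearMap.add_apply, h4, Pi.add_apply,
    Pi.smul_apply, secondCentralDiffₗ_apply]
  rw [two_nsmul h, ← add_assoc, ← sub_sub, add_sub_cancel_right, sub_add_cancel]
  abel

theorem secondCentralDiffₗ_two_nsmul_pow (k : ℕ) :
    secondCentralDiffₗ M G (2 • h) ^ k = ∑ r ∈ range (k + 1),
      (k.choose r * 4 ^ (k - r)) • secondCentralDiffₗ M G h ^ (k + r) := by
  set δ := secondCentralDiffₗ M G h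
  have hδ4 : Commute δ 4 := Commute.ofNat_right δ 4
  rw [secondCentralDiffₗ_two_nsmul, ((Commute.refl δ).add_right hδ4).mul_pow, hδ4.add_pow,
    mul_sum]
  refine sum_congr rfl fun r _ => ?_
  rw [nsmul_eq_mul', pow_add, Nat.cast_mul, Nat.cast_pow, Nat.cast_ofNat,
    (Nat.cast_commute _ _).eq]
  simp only [mul_assoc]

theorem secondCentralDiffₗ_pow_eval_eq_zero {R : Type*} [CommRing R] {P : R[X]} {i : ℕ}
    (hP : P.natDegree < 2 * i) : (secondCentralDiffₗ R R 1 ^ i) P.eval = 0 := by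
  rw [secondCentralDiffₗ_pow, Module.End.mul_apply, coe_fwdDiffₗ_pow,
    P.fwdDiff_iter_eq_zero_of_degree_lt hP, map_zero]

end SecondCentralDiff

theorem four_pow_mul_cCoeff {n : ℕ} (hn : 1 ≤ n) (i : ℕ) :
    4 ^ i * cCoeff n i = (secondCentralDiffₗ ℚ ℚ 1 ^ i) (fun x => (2 * x) ^ (2 * n)) 0 := by
  have heven : ∀ x : ℚ, (2 * -x) ^ (2 * n) = (2 * x) ^ (2 * n) := fun x => by
    rw [mul_neg, (even_two_mul n).neg_pow]
  have hzero : (2 * 0 : ℚ) ^ (2 * n) = 0 := by rw [mul_zero, zero_pow (by omega)]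
  rw [secondCentralDiffₗ_pow_apply_zero_of_even 1 heven hzero, cCoeff, ← mul_assoc,
    mul_div_cancel₀ _ (by positivity), nsmul_eq_mul]
  simp [zsmul_eq_mul]

theorem cCoeff_eq_zero_of_lt {n i : ℕ} (hn : 1 ≤ n) (hi : n < i) : cCoeff n i = 0 := by
  have hpoly : (fun x : ℚ => (2 * x) ^ (2 * n)) = (C (4 ^ n : ℚ) * X ^ (2 * n)).eval := by
    ext x
    rw [eval_mul, eval_C, eval_pow, eval_X, mul_pow, pow_mul]
    norm_num
  have hvanish := secondCentralDiffₗ_pow_eval_eq_zero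
    ((natDegree_C_mul_X_pow_le (4 ^ n : ℚ) (2 * n)).trans_lt (by omega : 2 * n < 2 * i))
  have h := four_pow_mul_cCoeff hn i
  rw [hpoly, hvanish, Pi.zero_apply] at h
  exact (mul_eq_zero.mp h).resolve_left (by positivity)

theorem secondCentralDiffₗ_two_pow_apply_zero_two_mul_pow (n k : ℕ) :
    (secondCentralDiffₗ ℚ ℚ 2 ^ k) (fun x => (2 * x) ^ (2 * n)) 0 =
      2 ^ (2 * n) * (secondCentralDiffₗ ℚ ℚ 1 ^ k) (fun x => (2 * x) ^ (2 * n)) 0 := by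
  have hcomp : (fun x : ℚ => (2 * x) ^ (2 * n)) ∘ nsmulAddMonoidHom 2 =
      (2 ^ (2 * n)) • fun x : ℚ => (2 * x) ^ (2 * n) := by
    ext x
    simp [mul_pow, nsmul_eq_mul]
  have h := secondCentralDiffₗ_pow_apply_map (1 : ℚ) (nsmulAddMonoidHom 2) k
    (fun x : ℚ => (2 * x) ^ (2 * n)) 0
  rw [hcomp, map_nsmul, map_zero] at h
  simpa [nsmul_eq_mul] using h

theorem Finset.sum_Icc_choose_sub_mul_eq_sum_range {R : Type*} [Semiring R] (c : ℕ → R)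
    {k n : ℕ} (hkn : k ≤ n) (hc : ∀ i, n < i → c i = 0) :
    ∑ i ∈ Icc k n, (k.choose (i - k) : R) * c i =
      ∑ r ∈ range (k + 1), (k.choose r : R) * c (k + r) := by
  rw [← Ico_add_one_right_eq_Icc, sum_Ico_eq_sum_range]
  simp only [Nat.add_sub_cancel_left]
  calc _ = ∑ r ∈ range (n + 1), (k.choose r : R) * c (k + r) :=
        sum_subset (range_subset_range.2 (by omega)) fun r _ hr => by
          rw [hc _ (by rw [mem_range] at hr; omega), mul_zero]
    _ = _ :=
        (sum_subset (range_subset_range.2 (by omega)) fun r _ hr => by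
          rw [Nat.choose_eq_zero_of_lt (by rw [mem_range] at hr; omega), Nat.cast_zero,
            zero_mul]).symm

theorem stmt_12 (n k : ℕ) (hk : 1 ≤ k) (hkn : k ≤ n) :
    ∑ i ∈ Finset.Icc k n, (k.choose (i - k) : ℚ) * cCoeff n i
    = 2 ^ (2 * (n - k)) * cCoeff n k := by
  have hn : 1 ≤ n := hk.trans hkn
  rw [sum_Icc_choose_sub_mul_eq_sum_range (cCoeff n) hkn fun i => cCoeff_eq_zero_of_lt hn]
  refine mul_left_cancel₀ (pow_ne_zero k (by norm_num : (16 : ℚ) ≠ 0)) ?_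
  calc 16 ^ k * ∑ r ∈ range (k + 1), (k.choose r : ℚ) * cCoeff n (k + r)
      = ∑ r ∈ range (k + 1),
          (k.choose r * 4 ^ (k - r) : ℚ) * (4 ^ (k + r) * cCoeff n (k + r)) := by
        rw [mul_sum]
        refine sum_congr rfl fun r hr => ?_
        have hr : k - r + (k + r) = 2 * k := by rw [mem_range] at hr; omega
        rw [show (16 : ℚ) ^ k = 4 ^ (k - r) * 4 ^ (k + r) by rw [← pow_add, hr, pow_mul]; norm_num]
        ring
    _ = (secondCentralDiffₗ ℚ ℚ (2 • 1) ^ k) (fun x => (2 * x) ^ (2 * n)) 0 := by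
        rw [secondCentralDiffₗ_two_nsmul_pow, LinearMap.sum_apply, Finset.sum_apply]
        refine sum_congr rfl fun r _ => ?_
        rw [four_pow_mul_cCoeff hn, LinearMap.smul_apply, Pi.smul_apply, nsmul_eq_mul]
        push_cast
        ring
    _ = 2 ^ (2 * n) * (4 ^ k * cCoeff n k) := by
        rw [two_nsmul, one_add_one_eq_two, secondCentralDiffₗ_two_pow_apply_zero_two_mul_pow,
          four_pow_mul_cCoeff hn]
    _ = 16 ^ k * (2 ^ (2 * (n - k)) * cCoeff n k) := by
        rw [show 2 * n = 2 * (n - k) + 2 * k by omega, pow_add, pow_mul, pow_mul,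
          show (16 : ℚ) ^ k = 4 ^ k * 4 ^ k by rw [← mul_pow]; norm_num]
        ring
end

section
/- Let u(n,k) = ((−1)^n/(2n)!) c(n,k) with c(n,k) = (2/4^k) ∑_{j=1}^{k} (−1)^{k−j} C(2k, k−j) (2j)^{2n}, and let v(n,k) = (−1)^n (2k)! 2^{2(n−k)} h(k,n)/(n² C(2n,n)) with h(1,n)=1 and h(k,n)=∑_{j=k−1}^{n−1} h(k−1,j)/j². Then for every N ≥ 1, the lower-triangular N×N matrices U = (u(n,k)) and V = (v(n,k)) (indices 1..N) satisfy UV = VU = Id, i.e. V is the inverse of U. -/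
/-- u(n,k) = ((−1)^n/(2n)!) c(n,k). -/
def uEnt (n k : ℕ) : ℚ := (-1 : ℚ) ^ n / ((2 * n).factorial : ℚ) * cCoeff n k

/-- The numbers h(k,n). -/
def hNum : ℕ → ℕ → ℚ
  | 0, _ => 0
  | 1, _ => 1
  | (k + 2), n => ∑ j ∈ Finset.Icc (k + 1) (n - 1), hNum (k + 1) j / (j : ℚ) ^ 2

/-- v(n,k) = (−1)^n (2k)! 2^{2(n−k)} h(k,n) / (n² C(2n,n)) for 1 ≤ k ≤ n, else 0. -/
def vEnt (n k : ℕ) : ℚ :=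
  if 1 ≤ k ∧ k ≤ n then
    (-1 : ℚ) ^ n * ((2 * k).factorial : ℚ) * 2 ^ (2 * (n - k)) /
      ((n : ℚ) ^ 2 * ((2 * n).choose n)) * hNum k n
  else 0

/-!
Since `U` and `V` are square, `V * U = 1` suffices. Expanding `v(n,m) u(m,k)`, the sum over `m`
collects into the generating polynomial `hGen n x = ∑_m h(m,n) x^m` evaluated at `x = -j²`,
`1 ≤ j ≤ k`. The recursion `h(k+1,n+1) = h(k+1,n) + h(k,n)/n²` gives
`hGen n x = x ∏_{i=1}^{n-1} (1 + x/i²)`, which vanishes at `-j²` for `j < n`; so only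
`j = k = n` survives, and there the product is `(-1)^{n-1} C(2n-1, n-1)`. That `U` is lower triangular,
`c(m,k) = 0` for `1 ≤ m < k`, is the vanishing of the `2k`-th finite difference of the even
polynomial `x^{2m}`, folded in half.
-/

open Finset

theorem alternating_sum_range_choose_mul_pow_eq_zero {R : Type*} [CommRing R] {n d : ℕ}
    (hd : d < n) (y : R) :
    ∑ i ∈ range (n + 1), (-1 : R) ^ (n - i) * n.choose i * (y + i) ^ d = 0 := by
  have := congr_fun (fwdDiff_iter_pow_eq_zero_of_lt (R := R) hd) y
  rw [fwdDiff_iter_eq_sum_shift] at this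
  simpa [zsmul_eq_mul] using this

theorem sum_range_two_mul_add_one_of_symm {M : Type*} [AddCommMonoid M] (f : ℕ → M) (k : ℕ)
    (hf : ∀ i ≤ k, f (k - i) = f (k + i)) :
    ∑ i ∈ range (2 * k + 1), f i = 2 • ∑ i ∈ range k, f i + f k := by
  have upper : ∑ i ∈ range k, f (k + 1 + i) = ∑ i ∈ range k, f i := by
    rw [← sum_range_reflect f k]
    refine sum_congr rfl fun i hi => ?_
    have := hf (i + 1) (by rw [mem_range] at hi; omega)
    rw [show k - 1 - i = k - (i + 1) by omega, this, add_assoc, add_comm 1 i]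
  rw [show 2 * k + 1 = k + 1 + k by ring, sum_range_add, sum_range_succ, upper]
  abel

theorem prod_range_add_div_eq_choose (a p : ℕ) :
    ∏ i ∈ range p, ((a + 1 + i : ℚ) / (i + 1)) = (a + p).choose p := by
  induction p with
  | zero => simp
  | succ p ih =>
    have h : ((a + p + 1) * (a + p).choose p : ℚ) = (a + p + 1).choose (p + 1) * (p + 1) := by
      exact_mod_cast Nat.add_one_mul_choose_eq (a + p) p
    rw [prod_range_succ, ih, ← add_assoc]
    field_simp
    linear_combination h

theorem cCoeff_eq_zero_of_lt_s15 {m k : ℕ} (hm : 1 ≤ m) (hmk : m < k) : cCoeff m k = 0 := by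
  set f : ℕ → ℚ := fun i => (-1) ^ i * (2 * k).choose i * (2 * ((k : ℚ) - i)) ^ (2 * m)
  have hsymm : ∀ i ≤ k, f (k - i) = f (k + i) := by
    intro i hi
    have hsign : (-1 : ℚ) ^ (k - i) = (-1) ^ (k + i) :=
      neg_one_pow_congr (by simp [Nat.even_sub hi, Nat.even_add])
    have hchoose : (2 * k).choose (k - i) = (2 * k).choose (k + i) :=
      Nat.choose_symm_of_eq_add (by omega)
    simp only [f, hsign, hchoose, Nat.cast_sub hi, Nat.cast_add, pow_mul]
    ring
  have hfull : ∑ i ∈ range (2 * k + 1), f i = 0 := by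
    have h := alternating_sum_range_choose_mul_pow_eq_zero (by omega : 2 * m < 2 * k) (-(k : ℚ))
    calc ∑ i ∈ range (2 * k + 1), f i
        = 4 ^ m * ∑ i ∈ range (2 * k + 1),
            (-1) ^ (2 * k - i) * ((2 * k).choose i : ℚ) * (-(k : ℚ) + i) ^ (2 * m) := by
          rw [mul_sum]
          refine sum_congr rfl fun i hi => ?_
          have hsign : (-1 : ℚ) ^ (2 * k - i) = (-1) ^ i :=
            neg_one_pow_congr (by simp [Nat.even_sub (mem_range_succ_iff.mp hi)])
          simp only [f, hsign, pow_mul]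
          rw [show (2 * ((k : ℚ) - i)) ^ 2 = 4 * (-(k : ℚ) + i) ^ 2 by ring, mul_pow]
          ring
      _ = 0 := by rw [h, mul_zero]
  have hmid : f k = 0 := by simp [f]; omega
  have hhalf : ∑ i ∈ range k, f i = 0 := by
    rw [sum_range_two_mul_add_one_of_symm f k hsymm, hmid, add_zero, smul_eq_zero] at hfull
    simpa using hfull
  refine mul_eq_zero_of_right _ (hhalf ▸ ?_)
  refine sum_nbij' (fun j => k - j) (fun i => k - i) ?_ ?_ ?_ ?_ fun j hj => ?_
  iterate 4 (intro a ha; simp only [mem_Icc, mem_range] at ha ⊢; omega)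
  simp [f, Nat.cast_sub (mem_Icc.mp hj).2]

theorem uEnt_eq_zero_of_lt {m k : ℕ} (hm : 1 ≤ m) (hmk : m < k) : uEnt m k = 0 := by
  rw [uEnt, cCoeff_eq_zero_of_lt_s15 hm hmk, mul_zero]

theorem vEnt_eq_zero_of_lt {n k : ℕ} (hnk : n < k) : vEnt n k = 0 :=
  if_neg fun h => by omega

theorem hNum_eq_zero_of_lt {k n : ℕ} (hk : 2 ≤ k) (hn : n < k) : hNum k n = 0 := by
  obtain ⟨k, rfl⟩ := Nat.exists_eq_add_of_le' hk
  rw [hNum, Icc_eq_empty (by omega), sum_empty]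

theorem hNum_succ_succ (k n : ℕ) :
    hNum (k + 1) (n + 1) = hNum (k + 1) n + hNum k n / (n : ℚ) ^ 2 := by
  match k, n with
  | 0, _ => simp [hNum]
  | k + 1, 0 => simp [hNum]
  | k + 1, n + 1 =>
    rw [hNum, hNum, Nat.add_sub_cancel, Nat.add_sub_cancel]
    rcases Nat.lt_or_ge n k with hnk | hkn
    · rw [Icc_eq_empty (by omega), Icc_eq_empty (by omega), sum_empty,
        hNum_eq_zero_of_lt (by omega) (by omega)]
      simp
    · rw [sum_Icc_succ_top (by omega)]

def hGen (n : ℕ) (x : ℚ) : ℚ := ∑ m ∈ range (n + 1), hNum m n * x ^ m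

theorem hGen_succ {n : ℕ} (hn : 1 ≤ n) (x : ℚ) :
    hGen (n + 1) x = hGen n x * (1 + x / (n : ℚ) ^ 2) := by
  have hshift : hGen n x = ∑ m ∈ range n, hNum (m + 1) n * x ^ (m + 1) := by
    rw [hGen, sum_range_succ']
    simp [hNum]
  rw [hGen, sum_range_succ', hNum, zero_mul, add_zero]
  simp_rw [hNum_succ_succ, add_mul, sum_add_distrib]
  rw [sum_range_succ, hNum_eq_zero_of_lt (by omega) (by omega), zero_mul, add_zero, mul_add,
    mul_one, ← hshift, hGen, sum_mul]
  congr 1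
  refine sum_congr rfl fun m _ => ?_
  ring

theorem hGen_eq_prod {n : ℕ} (hn : 1 ≤ n) (x : ℚ) :
    hGen n x = x * ∏ i ∈ Ico 1 n, (1 + x / (i : ℚ) ^ 2) := by
  induction n, hn using Nat.le_induction with
  | base => simp [hGen, sum_range_succ, hNum]
  | succ n hn ih => rw [hGen_succ hn, ih, prod_Ico_succ_top hn, mul_assoc]

theorem hGen_eq_sum_Icc (n : ℕ) (x : ℚ) : hGen n x = ∑ m ∈ Icc 1 n, hNum m n * x ^ m := by
  rw [hGen, range_eq_Ico, sum_eq_sum_Ico_succ_bot n.succ_pos, hNum, zero_mul, zero_add]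
  rfl

theorem hGen_neg_sq_eq_zero {j n : ℕ} (hj : 1 ≤ j) (hjn : j < n) :
    hGen n (-(j : ℚ) ^ 2) = 0 := by
  rw [hGen_eq_prod (by omega)]
  refine mul_eq_zero_of_right _ (prod_eq_zero (mem_Ico.mpr ⟨hj, hjn⟩) ?_)
  have : (j : ℚ) ≠ 0 := by positivity
  field_simp
  ring

theorem hGen_neg_sq_self {n : ℕ} (hn : 1 ≤ n) :
    hGen n (-(n : ℚ) ^ 2) = (-1) ^ n * (n : ℚ) ^ 2 * (2 * n).choose n / 2 := by
  obtain ⟨p, rfl⟩ := Nat.exists_eq_add_of_le' hn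
  have hfactor : ∀ i ∈ range p, 1 + -((p + 1 : ℕ) : ℚ) ^ 2 / ((1 + i : ℕ) : ℚ) ^ 2
      = -1 * (((p : ℚ) - i) / (i + 1)) * ((((p + 1 : ℕ) : ℚ) + 1 + i) / (i + 1)) := by
    intro i _
    push_cast
    field_simp
    ring
  have hreflect : ∏ i ∈ range p, ((p : ℚ) - i) = ∏ i ∈ range p, ((i : ℚ) + 1) := by
    rw [← prod_range_reflect (fun i : ℕ => (i : ℚ) + 1)]
    refine prod_congr rfl fun i hi => ?_
    rw [mem_range] at hi
    rw [Nat.cast_sub (by omega), Nat.cast_sub (by omega)]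
    ring
  have hcentral : ((2 * (p + 1)).choose (p + 1) : ℚ) = 2 * (2 * p + 1).choose p := by
    have h : ((2 * p + 1 + 1) * (2 * p + 1).choose p : ℚ)
        = (2 * p + 1 + 1).choose (p + 1) * (p + 1) := by
      exact_mod_cast Nat.add_one_mul_choose_eq (2 * p + 1) p
    rw [show 2 * (p + 1) = 2 * p + 1 + 1 by ring]
    apply mul_right_cancel₀ (show (p : ℚ) + 1 ≠ 0 by positivity)
    linear_combination -h
  rw [hGen_eq_prod hn, prod_Ico_eq_prod_range, Nat.add_sub_cancel, prod_congr rfl hfactor,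
    prod_mul_distrib, prod_mul_distrib, prod_div_distrib, hreflect,
    div_self (prod_ne_zero_iff.mpr fun i _ => by positivity), prod_range_add_div_eq_choose,
    prod_const, card_range, hcentral]
  push_cast
  ring_nf

theorem vEnt_mul_uEnt {n m : ℕ} (hm : 1 ≤ m) (hmn : m ≤ n) (k : ℕ) :
    vEnt n m * uEnt m k = (-1) ^ n * 2 * 4 ^ n / ((n : ℚ) ^ 2 * (2 * n).choose n * 4 ^ k) *
      ∑ j ∈ Icc 1 k,
        (-1) ^ (k - j) * ((2 * k).choose (k - j) : ℚ) * (hNum m n * (-(j : ℚ) ^ 2) ^ m) := by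
  have h4 : (2 : ℚ) ^ (2 * (n - m)) = 4 ^ n / 4 ^ m := by
    rw [eq_div_iff (by positivity), pow_mul, show (2 : ℚ) ^ 2 = 4 by norm_num, ← pow_add,
      Nat.sub_add_cancel hmn]
  rw [vEnt, if_pos ⟨hm, hmn⟩, uEnt, cCoeff, h4, mul_sum, mul_sum, mul_sum, mul_sum]
  refine sum_congr rfl fun j _ => ?_
  rw [neg_pow, mul_pow, pow_mul, pow_mul, ← pow_mul (j : ℚ)]
  field_simp
  ring

theorem sum_vEnt_mul_uEnt {n k : ℕ} (hn : 1 ≤ n) (hk : 1 ≤ k) :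
    ∑ m ∈ Icc 1 n, vEnt n m * uEnt m k = if n = k then 1 else 0 := by
  rcases lt_or_ge n k with hnk | hkn
  · rw [if_neg hnk.ne]
    exact sum_eq_zero fun m hm => by
      rw [uEnt_eq_zero_of_lt (mem_Icc.mp hm).1 (by rw [mem_Icc] at hm; omega), mul_zero]
  rw [sum_congr rfl fun m hm => vEnt_mul_uEnt (mem_Icc.mp hm).1 (mem_Icc.mp hm).2 k, ← mul_sum,
    sum_comm]
  simp_rw [← mul_sum, ← hGen_eq_sum_Icc]
  rcases hkn.lt_or_eq with hkn | rfl
  · rw [if_neg hkn.ne', sum_eq_zero fun j hj => ?_, mul_zero]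
    rw [hGen_neg_sq_eq_zero (mem_Icc.mp hj).1 (by rw [mem_Icc] at hj; omega), mul_zero]
  · obtain ⟨p, rfl⟩ := Nat.exists_eq_add_of_le' hk
    rw [if_pos rfl, sum_Icc_succ_top hn, sum_eq_zero fun j hj => ?_, zero_add, Nat.sub_self,
      Nat.choose_zero_right, hGen_neg_sq_self hn]
    · have hC : ((2 * (p + 1)).choose (p + 1) : ℚ) ≠ 0 :=
        Nat.cast_ne_zero.mpr (Nat.choose_pos (by omega)).ne'
      field_simp
      ring_nf
      exact Even.neg_one_pow ⟨p, by ring⟩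
    rw [hGen_neg_sq_eq_zero (mem_Icc.mp hj).1 (by rw [mem_Icc] at hj; omega), mul_zero]

theorem stmt_15_general (N : ℕ) :
    let U : Matrix (Fin N) (Fin N) ℚ :=
      fun n k => if (k : ℕ) ≤ (n : ℕ) then uEnt ((n : ℕ) + 1) ((k : ℕ) + 1) else 0
    let V : Matrix (Fin N) (Fin N) ℚ :=
      fun n k => if (k : ℕ) ≤ (n : ℕ) then vEnt ((n : ℕ) + 1) ((k : ℕ) + 1) else 0
    U * V = 1 ∧ V * U = 1 := by
  intro U V
  have hU : U = Matrix.of fun n k : Fin N => uEnt ((n : ℕ) + 1) ((k : ℕ) + 1) := by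
    ext n k
    exact ite_eq_left_iff.mpr fun h => (uEnt_eq_zero_of_lt (by omega) (by omega)).symm
  have hV : V = Matrix.of fun n k : Fin N => vEnt ((n : ℕ) + 1) ((k : ℕ) + 1) := by
    ext n k
    exact ite_eq_left_iff.mpr fun h => (vEnt_eq_zero_of_lt (by omega)).symm
  have hVU : V * U = 1 := by
    ext n k
    rw [hU, hV, Matrix.mul_apply, Matrix.one_apply]
    simp only [Matrix.of_apply]
    rw [Fin.sum_univ_eq_sum_range (fun m => vEnt (n + 1) (m + 1) * uEnt (m + 1) (k + 1)),
      range_eq_Ico, sum_Ico_add' (fun m => vEnt (n + 1) m * uEnt m (k + 1)),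
      ← sum_subset (s₁ := Icc 1 ((n : ℕ) + 1)) (fun m hm => ?_) fun m hm hm' => ?_,
      sum_vEnt_mul_uEnt (by omega) (by omega)]
    · simp [Fin.ext_iff]
    · rw [mem_Icc] at hm
      rw [mem_Ico]
      omega
    · rw [mem_Ico, mem_Icc] at *
      rw [vEnt_eq_zero_of_lt (by omega), zero_mul]
  exact ⟨mul_eq_one_comm.mpr hVU, hVU⟩

theorem stmt_15 (N : ℕ) (hN : 1 ≤ N) :
    let U : Matrix (Fin N) (Fin N) ℚ :=
      fun n k => if (k : ℕ) ≤ (n : ℕ) then uEnt ((n : ℕ) + 1) ((k : ℕ) + 1) else 0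
    let V : Matrix (Fin N) (Fin N) ℚ :=
      fun n k => if (k : ℕ) ≤ (n : ℕ) then vEnt ((n : ℕ) + 1) ((k : ℕ) + 1) else 0
    U * V = 1 ∧ V * U = 1 :=
  stmt_15_general N
end
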